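/- For every positive integer n, Σ_{k=1}^{n} C(2n, n−k) · k^10 = 2^(2n−6) · n · (945n^4 − 3150n^3 + 4095n^2 − 2370n + 496). -/

import Mathlib

/-!
Write `B_i(n) = ∑_{j=0}^{2n} C(2n, j) (n - j)^i`. Applying Pascal's rule twice turns `B_i(n + 1)`
into `∑_j C(2n, j) ((x + 1)^i + 2 x^i + (x - 1)^i)` with `x = n - j`, and expanding the binomials
expresses `B_i(n + 1)` through `B_0(n), …, B_i(n)`, where odd `l` contribute nothing. Induction on
`n` then gives closed forms for `B_0, B_2, …, B_10`, and for even `i > 0` the symmetry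
`C(2n, n - k) = C(2n, n + k)` shows that `B_i(n)` is twice the sum of the theorem.
-/

open Finset

noncomputable def centralBinomialMoment (i n : ℕ) : ℝ :=
  ∑ j ∈ range (2 * n + 1), ((2 * n).choose j : ℝ) * ((n : ℝ) - j) ^ i

theorem Finset.sum_range_choose_succ_mul {R : Type*} [NonAssocSemiring R] (N : ℕ)
    (f : ℕ → R) :
    ∑ j ∈ range (N + 2), ((N + 1).choose j : R) * f j =
      ∑ j ∈ range (N + 1), (N.choose j : R) * (f j + f (j + 1)) := by
  simpa only [mul_add, sum_add_distrib] using sum_choose_succ_mul (fun j _ => f j) N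

theorem sum_range_choose_two_mul_succ {R : Type*} [CommRing R] (n : ℕ) (g : R → R) :
    ∑ j ∈ range (2 * (n + 1) + 1), ((2 * (n + 1)).choose j : R) * g ((n + 1 : ℕ) - j) =
      ∑ j ∈ range (2 * n + 1), ((2 * n).choose j : R) *
        (g ((n : R) - j + 1) + 2 * g ((n : R) - j) + g ((n : R) - j - 1)) := by
  rw [show 2 * (n + 1) = 2 * n + 1 + 1 by ring, sum_range_choose_succ_mul,
    sum_range_choose_succ_mul]
  refine sum_congr rfl fun j _ => ?_
  push_cast
  ring_nf

theorem centralBinomialMoment_succ (i n : ℕ) :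
    centralBinomialMoment i (n + 1) = 2 * centralBinomialMoment i n +
      ∑ l ∈ range (i + 1),
        (i.choose l : ℝ) * (1 + (-1) ^ (i - l)) * centralBinomialMoment l n := by
  have hexp (x : ℝ) : (x + 1) ^ i + 2 * x ^ i + (x - 1) ^ i =
      2 * x ^ i + ∑ l ∈ range (i + 1), (i.choose l : ℝ) * (1 + (-1) ^ (i - l)) * x ^ l := by
    rw [sub_eq_add_neg, add_pow, add_pow, add_right_comm, ← sum_add_distrib]
    simp only [one_pow]
    rw [add_comm (2 * x ^ i)]
    congr 1
    refine sum_congr rfl fun l _ => ?_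
    ring
  have hstep := sum_range_choose_two_mul_succ n (· ^ i : ℝ → ℝ)
  simp only [hexp] at hstep
  unfold centralBinomialMoment
  rw [hstep]
  simp only [mul_add, sum_add_distrib, mul_sum]
  rw [sum_comm (s := range (2 * n + 1))]
  congr 1
  · refine sum_congr rfl fun j _ => ?_
    ring
  · refine sum_congr rfl fun l _ => sum_congr rfl fun j _ => ?_
    ring

theorem centralBinomialMoment_zero_eval (n : ℕ) : centralBinomialMoment 0 n = 4 ^ n := by
  induction n with
  | zero => simp [centralBinomialMoment]
  | succ n ih =>
    simp only [centralBinomialMoment_succ, sum_range_succ, sum_range_zero]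
    norm_num [ih]
    ring

theorem centralBinomialMoment_two_eval (n : ℕ) :
    centralBinomialMoment 2 n = (n : ℝ) / 2 * 4 ^ n := by
  induction n with
  | zero => simp [centralBinomialMoment]
  | succ n ih =>
    simp only [centralBinomialMoment_succ, sum_range_succ, sum_range_zero]
    norm_num [Nat.choose, ih, centralBinomialMoment_zero_eval]
    ring

theorem centralBinomialMoment_four_eval (n : ℕ) :
    centralBinomialMoment 4 n = (3 * (n : ℝ) ^ 2 - n) / 4 * 4 ^ n := by
  induction n with
  | zero => simp [centralBinomialMoment]
  | succ n ih =>
    simp only [centralBinomialMoment_succ, sum_range_succ, sum_range_zero]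
    norm_num [Nat.choose, ih, centralBinomialMoment_two_eval, centralBinomialMoment_zero_eval]
    ring

theorem centralBinomialMoment_six_eval (n : ℕ) :
    centralBinomialMoment 6 n = (15 * (n : ℝ) ^ 3 - 15 * n ^ 2 + 4 * n) / 8 * 4 ^ n := by
  induction n with
  | zero => simp [centralBinomialMoment]
  | succ n ih =>
    simp only [centralBinomialMoment_succ, sum_range_succ, sum_range_zero]
    norm_num [Nat.choose, ih, centralBinomialMoment_four_eval, centralBinomialMoment_two_eval,
      centralBinomialMoment_zero_eval]
    ring

theorem centralBinomialMoment_eight_eval (n : ℕ) :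
    centralBinomialMoment 8 n =
      (105 * (n : ℝ) ^ 4 - 210 * n ^ 3 + 147 * n ^ 2 - 34 * n) / 16 * 4 ^ n := by
  induction n with
  | zero => simp [centralBinomialMoment]
  | succ n ih =>
    simp only [centralBinomialMoment_succ, sum_range_succ, sum_range_zero]
    norm_num [Nat.choose, ih, centralBinomialMoment_six_eval, centralBinomialMoment_four_eval,
      centralBinomialMoment_two_eval, centralBinomialMoment_zero_eval]
    ring

theorem centralBinomialMoment_ten_eval (n : ℕ) :
    centralBinomialMoment 10 n =
      n * (945 * (n : ℝ) ^ 4 - 3150 * n ^ 3 + 4095 * n ^ 2 - 2370 * n + 496) / 32 * 4 ^ n := by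
  induction n with
  | zero => simp [centralBinomialMoment]
  | succ n ih =>
    simp only [centralBinomialMoment_succ, sum_range_succ, sum_range_zero]
    norm_num [Nat.choose, ih, centralBinomialMoment_eight_eval, centralBinomialMoment_six_eval,
      centralBinomialMoment_four_eval, centralBinomialMoment_two_eval,
      centralBinomialMoment_zero_eval]
    ring

theorem centralBinomialMoment_eq_two_mul_sum {i : ℕ} (hi : Even i) (hi₀ : i ≠ 0) (n : ℕ) :
    centralBinomialMoment i n =
      2 * ∑ k ∈ Icc 1 n, ((2 * n).choose (n - k) : ℝ) * (k : ℝ) ^ i := by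
  set f : ℕ → ℝ := fun j => ((2 * n).choose j : ℝ) * ((n : ℝ) - j) ^ i
  have hIcc : ∑ k ∈ Icc 1 n, ((2 * n).choose (n - k) : ℝ) * (k : ℝ) ^ i =
      ∑ k ∈ range n, ((2 * n).choose (n - (k + 1)) : ℝ) * ((k + 1 : ℕ) : ℝ) ^ i := by
    rw [← Finset.Ico_add_one_right_eq_Icc, Finset.sum_Ico_eq_sum_range]
    simp [add_comm]
  have hlow : ∑ j ∈ range n, f j = ∑ k ∈ range n,
      ((2 * n).choose (n - (k + 1)) : ℝ) * ((k + 1 : ℕ) : ℝ) ^ i := by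
    rw [← sum_range_reflect]
    refine sum_congr rfl fun k hk => ?_
    have hk : k < n := mem_range.mp hk
    simp only [f, show n - 1 - k = n - (k + 1) by omega, Nat.cast_sub hk]
    push_cast
    ring_nf
  have hhigh : ∑ k ∈ range n, f (n + (k + 1)) = ∑ k ∈ range n,
      ((2 * n).choose (n - (k + 1)) : ℝ) * ((k + 1 : ℕ) : ℝ) ^ i := by
    refine sum_congr rfl fun k hk => ?_
    have hk : k < n := mem_range.mp hk
    simp only [f, Nat.choose_symm_of_eq_add (show 2 * n = n + (k + 1) + (n - (k + 1)) by omega)]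
    push_cast
    rw [show (n : ℝ) - (n + (k + 1)) = -(k + 1) by ring, hi.neg_pow]
  have hcentre : f (n + 0) = 0 := by simp [f, hi₀]
  calc centralBinomialMoment i n = ∑ j ∈ range (n + (n + 1)), f j := by
        rw [centralBinomialMoment, show n + (n + 1) = 2 * n + 1 by ring]
    _ = ∑ j ∈ range n, f j + ∑ k ∈ range n, f (n + (k + 1)) := by
        rw [sum_range_add, sum_range_succ', hcentre, add_zero]
    _ = _ := by rw [hlow, hhigh, hIcc]; ring

theorem A_ten_eval (n : ℕ) :
    ∑ k ∈ Finset.Icc 1 n, (((2 * n).choose (n - k) : ℝ)) * (k : ℝ) ^ 10 =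
      (2 : ℝ) ^ (2 * (n : ℤ) - 6) * (n : ℝ) *
        (945 * (n : ℝ) ^ 4 - 3150 * (n : ℝ) ^ 3 + 4095 * (n : ℝ) ^ 2 - 2370 * (n : ℝ) + 496) := by
  have hmoment := centralBinomialMoment_eq_two_mul_sum (i := 10) (by decide) (by decide) n
  rw [centralBinomialMoment_ten_eval] at hmoment
  have hpow : (2 : ℝ) ^ (2 * (n : ℤ) - 6) = 4 ^ n / 64 := by
    rw [zpow_sub₀ two_ne_zero, zpow_mul, zpow_natCast]
    norm_num
  rw [hpow]
  linarith
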